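/- arXiv:0909.4601 — 4 statements merged into one kernel-verified Lean document; each statement's English description precedes it below -/
import Mathlib

section
/- Let F be a finite field and let Y = [A | y] be an N×(n+m) matrix over F of full rank N, where A is the N×n left part and y the N×m right part. Set μ' = n − rank A and δ' = N − rank A. Then there exist matrices r' ∈ F^{n×m}, L' ∈ F^{n×μ'}, E' ∈ F^{δ'×m} and a subset U ⊆ {0,…,n−1} with |U| = μ' such that: (i) I_U^T r' = 0 (the rows of r' indexed by U are zero), (ii) I_U^T L' = −I_{μ'} (the rows of L' indexed by U, taken in increasing order, form the negative of the μ'×μ' identity matrix), (iii) rank E' = δ', and (iv) the row space of the (n+δ')×(n+m) block matrix [[I_n + L' I_U^T , r'],[0 , E']] equals the row space of Y. -/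
open Matrix

/-- The row space of a matrix: the span of its rows. -/
noncomputable def rowSpace {F : Type*} [Field F] {ι κ : Type*} (M : Matrix ι κ F) :
    Submodule F (κ → F) :=
  Submodule.span F (Set.range fun i => M i)

/-- `matSel F U h` is the matrix `I_U`: the `n × |U|` matrix formed by the columns of the
`n × n` identity matrix indexed by `U`, in increasing order. -/
def matSel (F : Type*) [Zero F] [One F] {n μ : ℕ} (U : Finset (Fin n)) (h : U.card = μ) :
    Matrix (Fin n) (Fin μ) F :=
  Matrix.of fun i j => if i = U.orderEmbOfFin h j then 1 else 0

/-!
Let `V` be the row space of `Y` and `π` the restriction to the first `n` coordinates, so that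
`π V` is the row space of `A`. Choose coordinate vectors `eᵤ` (`u ∈ U`) spanning a complement of
`π V` in `Fⁿ`, and lift the projection of `Fⁿ` onto `π V` along this complement linearly into `V`.
The lifts of `e₀, …, eₙ₋₁` are the top rows `[P | r']`: those indexed by `U` vanish, and outside
the columns `U` the block `P` agrees with the identity, which is exactly the shape
`P = 1 + L' I_Uᵀ` with `I_Uᵀ L' = -1`. A basis of `V ⊓ ker π` gives the rows `[0 | E']`, and both
families together span `V` because the top rows already map onto `π V`.
-/

open Module Submodule

section matSel

variable {F : Type*} [Ring F] {n μ : ℕ} (U : Finset (Fin n)) (h : U.card = μ)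

lemma matSel_eq_submatrix_one :
    matSel F U h = (1 : Matrix (Fin n) (Fin n) F).submatrix id (U.orderEmbOfFin h) := by
  ext i j
  simp [matSel, one_apply]

lemma matSel_transpose_mul {α : Type*} (M : Matrix (Fin n) α F) :
    (matSel F U h)ᵀ * M = M.submatrix (U.orderEmbOfFin h) id := by
  rw [matSel_eq_submatrix_one, transpose_submatrix, transpose_one,
    ← submatrix_id_id (1 : Matrix (Fin n) (Fin n) F), submatrix_submatrix]
  exact one_submatrix_mul _ (Equiv.refl _) M

lemma mul_matSel {α : Type*} (M : Matrix α (Fin n) F) :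
    M * matSel F U h = M.submatrix id (U.orderEmbOfFin h) := by
  rw [matSel_eq_submatrix_one]
  exact mul_submatrix_one (Equiv.refl _) _ M

lemma matSel_transpose_mul_matSel : (matSel F U h)ᵀ * matSel F U h = 1 := by
  rw [matSel_transpose_mul, matSel_eq_submatrix_one, submatrix_submatrix]
  exact submatrix_one_embedding (U.orderEmbOfFin h).toEmbedding

lemma matSel_transpose_mul_eq_zero {α : Type*} {M : Matrix (Fin n) α F}
    (hM : ∀ u ∈ U, M u = 0) : (matSel F U h)ᵀ * M = 0 := by
  ext j k
  simp [matSel_transpose_mul, hM _ (U.orderEmbOfFin_mem h j)]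

lemma mul_matSel_transpose_apply_orderEmbOfFin {α : Type*} (M : Matrix α (Fin μ) F) (i : α)
    (j : Fin μ) : (M * (matSel F U h)ᵀ) i (U.orderEmbOfFin h j) = M i j := by
  simp [mul_apply, matSel, (U.orderEmbOfFin h).injective.eq_iff]

lemma mul_matSel_transpose_apply_of_notMem {α : Type*} (M : Matrix α (Fin μ) F) (i : α)
    {k : Fin n} (hk : k ∉ U) : (M * (matSel F U h)ᵀ) i k = 0 := by
  have hne : ∀ j, k ≠ U.orderEmbOfFin h j := fun j hkj => hk (hkj ▸ U.orderEmbOfFin_mem h j)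
  simp [mul_apply, matSel, hne]

lemma eq_one_add_mul_matSel_transpose (P : Matrix (Fin n) (Fin n) F)
    (hP : ∀ i, ∀ k ∉ U, P i k = (1 : Matrix (Fin n) (Fin n) F) i k) :
    P = 1 + (P * matSel F U h - matSel F U h) * (matSel F U h)ᵀ := by
  ext i k
  by_cases hk : k ∈ U
  · obtain ⟨j, rfl⟩ : k ∈ Set.range (U.orderEmbOfFin h) := by
      rwa [Finset.range_orderEmbOfFin]
    rw [Matrix.add_apply, mul_matSel_transpose_apply_orderEmbOfFin, Matrix.sub_apply, mul_matSel,
      matSel_eq_submatrix_one, submatrix_apply, submatrix_apply, id, add_sub_cancel]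
  · rw [Matrix.add_apply, mul_matSel_transpose_apply_of_notMem U h _ _ hk, add_zero, hP i k hk]

lemma matSel_transpose_mul_sub_matSel {P : Matrix (Fin n) (Fin n) F}
    (hP : (matSel F U h)ᵀ * P = 0) :
    (matSel F U h)ᵀ * (P * matSel F U h - matSel F U h) = -1 := by
  rw [Matrix.mul_sub, ← Matrix.mul_assoc, hP, Matrix.zero_mul, matSel_transpose_mul_matSel,
    zero_sub]

end matSel

section CoordinateComplement

variable {K ι : Type*} [DivisionRing K] [DecidableEq ι]

lemma apply_eq_zero_of_mem_span_single_image {U : Set ι} {x : ι → K}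
    (hx : x ∈ span K ((fun i => Pi.single i (1 : K)) '' U)) {k : ι} (hk : k ∉ U) : x k = 0 := by
  have hle : span K ((fun i => Pi.single i (1 : K)) '' U) ≤ Submodule.pi Uᶜ fun _ => ⊥ := by
    rw [span_le]
    rintro _ ⟨u, hu, rfl⟩ k hk
    exact Pi.single_eq_of_ne (ne_of_mem_of_not_mem hu hk).symm _
  exact hle hx k hk

lemma finrank_span_single_image (U : Finset ι) :
    finrank K (span K ((fun i => Pi.single i (1 : K)) '' (U : Set ι))) = U.card := by
  have hli := (Pi.linearIndependent_single_one ι K).comp (fun x : (U : Set ι) => (x : ι))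
    Subtype.val_injective
  rw [Set.image_eq_range]
  exact (finrank_span_eq_card hli).trans (by simp)

lemma projection_apply_of_notMem {R : Submodule K (ι → K)} {U : Set ι}
    (hR : IsCompl R (span K ((fun i => Pi.single i (1 : K)) '' U))) (x : ι → K) {k : ι}
    (hk : k ∉ U) : R.projection _ hR x k = x k := by
  have h := apply_eq_zero_of_mem_span_single_image (sub_projection_mem hR x) hk
  rwa [Pi.sub_apply, sub_eq_zero, eq_comm] at h

variable [Fintype ι]

lemma span_range_single_one : span K (Set.range fun i : ι => Pi.single i (1 : K)) = ⊤ := by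
  have hbasis : ⇑(Pi.basisFun K ι) = fun i => Pi.single i 1 := funext (Pi.basisFun_apply K ι)
  rw [← hbasis, (Pi.basisFun K ι).span_eq]

lemma exists_isCompl_span_single_image (R : Submodule K (ι → K)) :
    ∃ U : Finset ι, IsCompl R (span K ((fun i => Pi.single i (1 : K)) '' (U : Set ι))) := by
  -- `U` indexes coordinate vectors whose images in `(ι → K) ⧸ R` form a basis.
  set v : ι → (ι → K) ⧸ R := fun i => R.mkQ (Pi.single i 1)
  obtain ⟨b, -, -, hspan, hli⟩ :=
    exists_linearIndepOn_extension (v := v) (linearIndepOn_empty K v) (Set.empty_subset Set.univ)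
  refine ⟨(Set.toFinite b).toFinset, ?_, ?_⟩
  · rw [Set.Finite.coe_toFinset, Set.image_eq_range, ← ker_mkQ R]
    exact (Submodule.range_ker_disjoint hli).symm
  · rw [codisjoint_iff, ← map_mkQ_eq_top, Set.Finite.coe_toFinset, map_span, ← Set.image_comp,
      eq_top_iff, ← range_mkQ R, LinearMap.range_eq_map, ← span_range_single_one, map_span,
      span_le, ← Set.range_comp, ← Set.image_univ]
    exact hspan

end CoordinateComplement

section Lift

variable {K M M₂ : Type*} [DivisionRing K] [AddCommGroup M] [Module K M] [AddCommGroup M₂]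
  [Module K M₂]

lemma Submodule.sup_inf_ker_eq_of_map_eq {S V : Submodule K M} (f : M →ₗ[K] M₂) (hSV : S ≤ V)
    (hmap : S.map f = V.map f) : S ⊔ V ⊓ LinearMap.ker f = V := by
  refine le_antisymm (sup_le hSV inf_le_left) ?_
  have hV : V ≤ S ⊔ LinearMap.ker f := (LinearMap.map_le_map_iff f).mp hmap.ge
  calc V ≤ (S ⊔ LinearMap.ker f) ⊓ V := le_inf hV le_rfl
    _ = S ⊔ LinearMap.ker f ⊓ V := sup_inf_assoc_of_le _ hSV
    _ = S ⊔ V ⊓ LinearMap.ker f := by rw [inf_comm]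

lemma Submodule.finrank_inf_ker_add_finrank_map [FiniteDimensional K M] (V : Submodule K M)
    (f : M →ₗ[K] M₂) : finrank K ↥(V ⊓ LinearMap.ker f) + finrank K ↥(V.map f) = finrank K V := by
  have h := LinearMap.finrank_range_add_finrank_ker (f.domRestrict V)
  rwa [LinearMap.range_domRestrict, LinearMap.ker_domRestrict, ← finrank_map_subtype_eq,
    map_comap_subtype, add_comm] at h

lemma Submodule.exists_lift_projection_map (V : Submodule K M) (f : M →ₗ[K] M₂)
    {E : Submodule K M₂} (hE : IsCompl (V.map f) E) :
    ∃ g : M₂ →ₗ[K] M, LinearMap.range g ≤ V ∧ f ∘ₗ g = (V.map f).projection E hE ∧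
      E ≤ LinearMap.ker g := by
  obtain ⟨φ, hφ⟩ := (f.submoduleMap V).exists_rightInverse_of_surjective
    (LinearMap.range_eq_top.mpr (f.submoduleMap_surjective V))
  refine ⟨V.subtype ∘ₗ φ ∘ₗ (V.map f).projectionOnto E hE, ?_, ?_, ?_⟩
  · rw [LinearMap.range_comp]
    exact map_subtype_le V _
  · ext x
    exact congrArg Subtype.val (LinearMap.congr_fun hφ _)
  · intro x hx
    simp [projectionOnto_apply_of_mem_right hE hx]

end Lift

section RowSpace

variable {F : Type*} [Field F]

lemma rowSpace_submatrix_id {ι κ κ' : Type*} (Y : Matrix ι κ F) (e : κ' → κ) :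
    rowSpace (Y.submatrix id e) = (rowSpace Y).map (LinearMap.funLeft F F e) := by
  rw [rowSpace, rowSpace, map_span, ← Set.range_comp]
  rfl

lemma rowSpace_fromRows {ι₁ ι₂ κ : Type*} (A₁ : Matrix ι₁ κ F) (A₂ : Matrix ι₂ κ F) :
    rowSpace (fromRows A₁ A₂) = rowSpace A₁ ⊔ rowSpace A₂ := by
  rw [rowSpace, rowSpace, rowSpace, ← span_union, ← Set.Sum.elim_range]
  rfl

lemma rowSpace_of_apply_single {ι κ : Type*} [Fintype ι] [DecidableEq ι]
    (g : (ι → F) →ₗ[F] (κ → F)) :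
    rowSpace (of fun i => g (Pi.single i 1)) = LinearMap.range g := by
  rw [rowSpace, LinearMap.range_eq_map, ← span_range_single_one, map_span, ← Set.range_comp]
  rfl

lemma rowSpace_of_basis {ι κ : Type*} {W : Submodule F (κ → F)} (b : Basis ι F W) :
    rowSpace (of fun i => (b i : κ → F)) = W := by
  change span F (Set.range (W.subtype ∘ b)) = W
  rw [Set.range_comp, ← map_span, b.span_eq, map_subtype_top]

lemma LinearIndependent.row_of_fromCols_zero {ι α β : Type*} {E : Matrix ι β F}
    (h : LinearIndependent F (fromCols (0 : Matrix ι α F) E).row) : LinearIndependent F E.row :=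
  h.of_comp ((LinearEquiv.sumArrowLequivProdArrow α β F F).symm.toLinearMap ∘ₗ LinearMap.inr F _ _)

lemma exists_rank_eq_and_rowSpace_fromCols_zero_eq {α β : Type*} [Finite α] [Fintype β]
    {W : Submodule F (α ⊕ β → F)} (hW : W ≤ LinearMap.ker (LinearMap.funLeft F F Sum.inl))
    {d : ℕ} (hd : finrank F W = d) :
    ∃ E : Matrix (Fin d) β F, E.rank = d ∧ rowSpace (fromCols (0 : Matrix (Fin d) α F) E) = W := by
  set b := finBasisOfFinrankEq F W hd
  set B : Matrix (Fin d) (α ⊕ β) F := of fun k => (b k : α ⊕ β → F)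
  have hB : fromCols 0 B.toCols₂ = B := by
    ext k (j | j)
    · exact (congr_fun (hW (b k).2) j).symm
    · rfl
  have hli : LinearIndependent F B.row := b.linearIndependent.map' W.subtype W.ker_subtype
  refine ⟨B.toCols₂, ?_, ?_⟩
  · rw [← hB] at hli
    rw [hli.row_of_fromCols_zero.rank_matrix, Fintype.card_fin]
  · rw [hB, rowSpace_of_basis]

end RowSpace

lemma exists_matrix_rowSpace_sup_inf_ker_eq {K ι κ : Type*} [Field K] [Fintype ι] [DecidableEq ι]
    (V : Submodule K (ι ⊕ κ → K)) {U : Finset ι}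
    (hU : IsCompl (V.map (LinearMap.funLeft K K Sum.inl))
      (span K ((fun i => Pi.single i (1 : K)) '' (U : Set ι)))) :
    ∃ T : Matrix ι (ι ⊕ κ) K, (∀ u ∈ U, T u = 0) ∧
      (∀ i, ∀ k ∉ U, T i (Sum.inl k) = (1 : Matrix ι ι K) i k) ∧
      rowSpace T ⊔ V ⊓ LinearMap.ker (LinearMap.funLeft K K Sum.inl) = V := by
  obtain ⟨g, hgV, hπg, hgE⟩ := V.exists_lift_projection_map (LinearMap.funLeft K K Sum.inl) hU
  refine ⟨of fun i => g (Pi.single i 1), fun u hu => hgE (subset_span ⟨u, hu, rfl⟩),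
    fun i k hk => ?_, ?_⟩
  · have hπ : g (Pi.single i 1) (Sum.inl k) = (V.map _).projection _ hU (Pi.single i 1) k :=
      congr_fun (LinearMap.congr_fun hπg _) k
    rw [of_apply, hπ, projection_apply_of_notMem hU _ hk, one_eq_pi_single]
  · rw [rowSpace_of_apply_single]
    refine sup_inf_ker_eq_of_map_eq _ hgV ?_
    rw [← LinearMap.range_comp, hπg, range_projection]

theorem stmt0_general {F : Type*} [Field F] {N n m : ℕ}
    (Y : Matrix (Fin N) (Fin n ⊕ Fin m) F) (hY : Y.rank = N)
    (A : Matrix (Fin N) (Fin n) F) (hA : A = Y.submatrix id Sum.inl) :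
    ∃ (U : Finset (Fin n)) (hU : U.card = n - A.rank)
      (r' : Matrix (Fin n) (Fin m) F)
      (L' : Matrix (Fin n) (Fin (n - A.rank)) F)
      (E' : Matrix (Fin (N - A.rank)) (Fin m) F),
      (matSel F U hU)ᵀ * r' = 0 ∧
      (matSel F U hU)ᵀ * L' = -1 ∧
      E'.rank = N - A.rank ∧
      rowSpace (Matrix.fromBlocks (1 + L' * (matSel F U hU)ᵀ) r' 0 E') = rowSpace Y := by
  set π := LinearMap.funLeft F F (Sum.inl : Fin n → Fin n ⊕ Fin m)
  have hρ : finrank F ((rowSpace Y).map π) = A.rank := by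
    rw [← rowSpace_submatrix_id, ← hA, A.rank_eq_finrank_span_row]
    rfl
  obtain ⟨U, hR⟩ := exists_isCompl_span_single_image ((rowSpace Y).map π)
  have hU : U.card = n - A.rank := by
    have := finrank_add_eq_of_isCompl hR
    rw [finrank_span_single_image, hρ, finrank_fin_fun] at this
    omega
  have hW : finrank F ↥(rowSpace Y ⊓ LinearMap.ker π) = N - A.rank := by
    have hV : finrank F (rowSpace Y) = N := Y.rank_eq_finrank_span_row.symm.trans hY
    have := (rowSpace Y).finrank_inf_ker_add_finrank_map π
    rw [hρ, hV] at this
    omega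
  obtain ⟨T, hTU, hT, hTY⟩ := exists_matrix_rowSpace_sup_inf_ker_eq (rowSpace Y) hR
  obtain ⟨E', hE', hE'W⟩ :=
    exists_rank_eq_and_rowSpace_fromCols_zero_eq (α := Fin n) inf_le_right hW
  refine ⟨U, hU, T.toCols₂, T.toCols₁ * matSel F U hU - matSel F U hU, E', ?_, ?_, hE', ?_⟩
  · exact matSel_transpose_mul_eq_zero U hU fun u hu => by ext k; simp [hTU u hu]
  · exact matSel_transpose_mul_sub_matSel U hU
      (matSel_transpose_mul_eq_zero U hU fun u hu => by ext k; simp [hTU u hu])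
  · rw [← eq_one_add_mul_matSel_transpose U hU T.toCols₁ hT, ← fromRows_fromCols_eq_fromBlocks,
      fromCols_toCols, rowSpace_fromRows, hE'W, hTY]

theorem stmt0 {F : Type*} [Field F] [Fintype F] {N n m : ℕ}
    (Y : Matrix (Fin N) (Fin n ⊕ Fin m) F) (hY : Y.rank = N)
    (A : Matrix (Fin N) (Fin n) F) (hA : A = Y.submatrix id Sum.inl) :
    ∃ (U : Finset (Fin n)) (hU : U.card = n - A.rank)
      (r' : Matrix (Fin n) (Fin m) F)
      (L' : Matrix (Fin n) (Fin (n - A.rank)) F)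
      (E' : Matrix (Fin (N - A.rank)) (Fin m) F),
      (matSel F U hU)ᵀ * r' = 0 ∧
      (matSel F U hU)ᵀ * L' = -1 ∧
      E'.rank = N - A.rank ∧
      rowSpace (Matrix.fromBlocks (1 + L' * (matSel F U hU)ᵀ) r' 0 E') = rowSpace Y :=
  stmt0_general Y hY A hA
end

section
/- Let F be a finite field, let Y be an N×(n+m) matrix over F, and suppose (r', L', E', U) with r' ∈ F^{n×m}, L' ∈ F^{n×μ'}, E' ∈ F^{δ'×m}, U ⊆ {0,…,n−1}, |U| = μ', satisfies I_U^T r' = 0, I_U^T L' = −I_{μ'}, rank E' = δ', and the row space of [[I_n + L' I_U^T , r'],[0 , E']] equals the row space of Y. Then for every x ∈ F^{n×m}, with X = [I_n | x] the n×(n+m) matrix obtained by concatenating the identity I_n and x, the subspace distance between the row space of X and the row space of Y equals 2·rank[[L' , r'−x],[0 , E']] − μ' − δ'. -/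
open Matrix

/-- The subspace distance `d_S(U, V) = dim U + dim V − 2 dim (U ⊓ V)`. -/
noncomputable def subDist {F : Type*} [Field F] {ι : Type*} (U V : Submodule F (ι → F)) : ℤ :=
  (Module.finrank F U : ℤ) + (Module.finrank F V : ℤ)
    - 2 * (Module.finrank F ↥(U ⊓ V) : ℤ)

/-!
With `K = -I_Uᵀ` a left inverse of `L'` killing `r'`, the matrix `P = 1 - L' K` is an idempotent
of rank `n - μ'` fixing `r'`, so a column operation shows `dim Y = (n - μ') + δ'`. Row operations by
`X = [I | x]` reduce `X + Y` to `[[I, x], [0, C]]` with `C = [r' - P x; E']`, so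
`dim (X + Y) = n + rank C`. A column operation turns `[[L', r' - x], [0, E']]` into
`[[L', r' - P x], [0, E']]`, whose row space contains every `[v | 0]` (namely
`(v K) [L' | r' - P x]`), so its rank is `μ' + rank C`. Now use
`d_S(X, Y) = 2 dim (X + Y) - dim X - dim Y`.
-/

open Module Submodule

theorem Submodule.finrank_eq_finrank_inf_ker_add_finrank_map {F V W : Type*} [Field F]
    [AddCommGroup V] [Module F V] [AddCommGroup W] [Module F W] [FiniteDimensional F V]
    (φ : V →ₗ[F] W) (p : Submodule F V) :
    finrank F p = finrank F ↥(p ⊓ LinearMap.ker φ) + finrank F ↥(p.map φ) := by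
  have h := LinearMap.finrank_range_add_finrank_ker (φ.domRestrict p)
  rw [LinearMap.range_domRestrict, LinearMap.ker_domRestrict] at h
  have e : ↥((LinearMap.ker φ).comap p.subtype) ≃ₗ[F] ↥(p ⊓ LinearMap.ker φ) := by
    rw [show (LinearMap.ker φ).comap p.subtype = (p ⊓ LinearMap.ker φ).comap p.subtype by
      rw [comap_inf, comap_subtype_self, top_inf_eq]]
    exact comapSubtypeEquivOfLe inf_le_left
  rw [← h, e.finrank_eq, add_comm]

namespace Matrix

variable {F : Type*} [Field F]

section RowSpace

variable {ι κ : Type*}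

theorem finrank_rowSpace [Finite ι] [Fintype κ] (A : Matrix ι κ F) :
    finrank F (rowSpace A) = A.rank :=
  (A.rank_eq_finrank_span_row).symm

theorem mem_rowSpace_iff [Fintype ι] {A : Matrix ι κ F} {v : κ → F} :
    v ∈ rowSpace A ↔ ∃ c, c ᵥ* A = v := by
  change v ∈ span F (Set.range A.row) ↔ _
  rw [← range_vecMulLinear]
  rfl

theorem rowSpace_fromRows {ι' : Type*} (A : Matrix ι κ F) (B : Matrix ι' κ F) :
    rowSpace (fromRows A B) = rowSpace A ⊔ rowSpace B := by
  rw [rowSpace, rowSpace, rowSpace, ← span_union, ← Set.Sum.elim_range]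
  rfl

theorem map_funLeft_inr_rowSpace_fromCols {α β : Type*} (A : Matrix ι α F) (B : Matrix ι β F) :
    (rowSpace (fromCols A B)).map (LinearMap.funLeft F F Sum.inr) = rowSpace B := by
  rw [rowSpace, rowSpace, map_span, ← Set.range_comp]
  rfl

end RowSpace

section Rank

variable {ι κ κ' α β : Type*}

theorem finrank_ker_funLeft_inr [Fintype α] [Fintype β] :
    finrank F (LinearMap.ker (LinearMap.funLeft F F (Sum.inr : β → α ⊕ β))) = Fintype.card α := by
  have h := LinearMap.finrank_range_add_finrank_ker (LinearMap.funLeft F F (Sum.inr : β → α ⊕ β))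
  rw [LinearMap.range_eq_top.mpr
      (LinearMap.funLeft_surjective_of_injective _ _ _ Sum.inr_injective), finrank_top,
    finrank_fintype_fun_eq_card, finrank_fintype_fun_eq_card, Fintype.card_sum] at h
  omega

theorem rank_fromCols_eq_finrank_inf_ker_add_rank [Fintype ι] [Fintype α] [Fintype β]
    (A : Matrix ι α F) (B : Matrix ι β F) :
    (fromCols A B).rank = finrank F ↥(rowSpace (fromCols A B) ⊓
      LinearMap.ker (LinearMap.funLeft F F (Sum.inr : β → α ⊕ β))) + B.rank := by
  rw [← finrank_rowSpace, ← finrank_rowSpace, ← map_funLeft_inr_rowSpace_fromCols A B]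
  exact finrank_eq_finrank_inf_ker_add_finrank_map _ _

theorem rank_fromCols_of_ker_le [Fintype ι] [Fintype α] [Fintype β] {A : Matrix ι α F}
    {B : Matrix ι β F}
    (h : LinearMap.ker (LinearMap.funLeft F F (Sum.inr : β → α ⊕ β)) ≤ rowSpace (fromCols A B)) :
    (fromCols A B).rank = Fintype.card α + B.rank := by
  rw [rank_fromCols_eq_finrank_inf_ker_add_rank, inf_eq_right.mpr h, finrank_ker_funLeft_inr]

theorem rank_mul_eq_left_of_mul_eq_one [Fintype κ] [Fintype κ'] [DecidableEq κ]
    {V : Matrix κ κ' F} {W : Matrix κ' κ F} (h : V * W = 1) (A : Matrix ι κ F) :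
    (A * V).rank = A.rank :=
  le_antisymm (A.rank_mul_le_left V)
    (by simpa [Matrix.mul_assoc, h] using (A * V).rank_mul_le_left W)

theorem rank_mul_eq_right_of_mul_eq_one [Fintype ι] [Fintype κ] [Fintype κ'] [DecidableEq κ]
    {V : Matrix κ κ' F} {W : Matrix κ' κ F} (h : V * W = 1) (A : Matrix κ ι F) :
    (W * A).rank = A.rank :=
  le_antisymm (W.rank_mul_le_right A)
    (by simpa [← Matrix.mul_assoc, h] using V.rank_mul_le_right (W * A))

theorem rank_add_le [Fintype ι] [Fintype κ] [DecidableEq ι] (A B : Matrix ι κ F) :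
    (A + B).rank ≤ A.rank + B.rank :=
  calc (A + B).rank
        = (fromCols (1 : Matrix ι ι F) (1 : Matrix ι ι F) * fromRows A B : Matrix ι κ F).rank := by
        rw [fromCols_mul_fromRows, Matrix.one_mul, Matrix.one_mul]
    _ ≤ (fromRows A B).rank := Matrix.rank_mul_le_right _ _
    _ ≤ A.rank + B.rank := by
        rw [← finrank_rowSpace, rowSpace_fromRows, ← finrank_rowSpace, ← finrank_rowSpace]
        exact finrank_add_le_finrank_add_finrank _ _

theorem rank_fromBlocks_zero_zero {ι' : Type*} [Fintype ι] [Fintype ι'] [Fintype α] [Fintype β]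
    [DecidableEq ι'] [DecidableEq α] (A : Matrix ι α F) (D : Matrix ι' β F) :
    (fromBlocks A 0 0 D).rank = A.rank + D.rank := by
  have hinf : rowSpace (fromBlocks A 0 0 D) ⊓
      LinearMap.ker (LinearMap.funLeft F F (Sum.inr : β → α ⊕ β)) = rowSpace (fromCols A 0) := by
    ext v
    simp only [mem_inf, LinearMap.mem_ker, mem_rowSpace_iff]
    constructor
    · rintro ⟨⟨c, rfl⟩, hc⟩
      refine ⟨c ∘ Sum.inl, ?_⟩
      have hc' : ∀ j, (c ∘ Sum.inr ᵥ* D) j = 0 := by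
        simpa [vecMul_fromBlocks, funext_iff, LinearMap.funLeft_apply] using hc
      ext (j | j) <;> simp [vecMul_fromBlocks, vecMul_fromCols, hc']
    · rintro ⟨c, rfl⟩
      refine ⟨⟨Sum.elim c 0, ?_⟩, ?_⟩
      · ext (j | j) <;> simp [vecMul_fromBlocks, vecMul_fromCols]
      · ext j
        simp [vecMul_fromCols]
  have hA : (fromCols A (0 : Matrix ι β F)).rank = A.rank := by
    rw [show fromCols A (0 : Matrix ι β F) = A * fromCols (1 : Matrix α α F) (0 : Matrix α β F) by
      simp [mul_fromCols]]
    exact rank_mul_eq_left_of_mul_eq_one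
      (W := fromRows (1 : Matrix α α F) (0 : Matrix β α F)) (by simp [fromCols_mul_fromRows]) A
  have hD : (fromRows (0 : Matrix ι β F) D).rank = D.rank := by
    rw [show fromRows (0 : Matrix ι β F) D
        = fromRows (0 : Matrix ι ι' F) (1 : Matrix ι' ι' F) * D by simp [fromRows_mul]]
    exact rank_mul_eq_right_of_mul_eq_one
      (V := fromCols (0 : Matrix ι' ι F) (1 : Matrix ι' ι' F)) (by simp [fromCols_mul_fromRows]) D
  rw [← fromCols_fromRows_eq_fromBlocks, rank_fromCols_eq_finrank_inf_ker_add_rank,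
    fromCols_fromRows_eq_fromBlocks, hinf, finrank_rowSpace, hA, hD]

theorem rank_mul_fromBlocks_one_zero_one [Fintype α] [Fintype β] [DecidableEq α] [DecidableEq β]
    (A : Matrix ι (α ⊕ β) F) (G : Matrix α β F) :
    (A * fromBlocks (1 : Matrix α α F) G 0 (1 : Matrix β β F)).rank = A.rank :=
  rank_mul_eq_left_of_isUnit_det _ _ (by simp)

theorem rank_fromBlocks_one_zero_one_mul [Fintype α] [Fintype β] [Fintype κ] [DecidableEq α]
    [DecidableEq β] (G : Matrix β α F) (A : Matrix (α ⊕ β) κ F) :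
    (fromBlocks (1 : Matrix α α F) 0 G (1 : Matrix β β F) * A).rank = A.rank :=
  rank_mul_eq_right_of_isUnit_det _ _ (by simp)

theorem rank_fromBlocks_mul_zero {ι' : Type*} [Fintype ι] [Fintype ι'] [Fintype α] [Fintype β]
    [DecidableEq ι'] [DecidableEq α] [DecidableEq β] (A : Matrix ι α F) (G : Matrix α β F)
    (D : Matrix ι' β F) : (fromBlocks A (A * G) 0 D).rank = A.rank + D.rank := by
  rw [← rank_mul_fromBlocks_one_zero_one _ (-G), fromBlocks_multiply]
  simpa using rank_fromBlocks_zero_zero A D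

theorem rank_fromBlocks_of_mul_eq_one {ι' μ : Type*} [Fintype ι] [Fintype ι'] [Fintype μ]
    [Fintype β] [DecidableEq μ] {K : Matrix μ ι F} {L : Matrix ι μ F} {T : Matrix ι β F}
    (hKL : K * L = 1) (hKT : K * T = 0) (E : Matrix ι' β F) :
    (fromBlocks L T 0 E).rank = Fintype.card μ + (fromRows T E).rank := by
  rw [← fromCols_fromRows_eq_fromBlocks]
  refine rank_fromCols_of_ker_le ?_
  rw [fromCols_fromRows_eq_fromBlocks]
  refine fun v hv => mem_rowSpace_iff.mpr ⟨Sum.elim (v ∘ Sum.inl ᵥ* K) 0, ?_⟩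
  have hv' : ∀ j, v (Sum.inr j) = 0 := by
    simpa [funext_iff, LinearMap.funLeft_apply] using hv
  ext (j | j) <;> simp [vecMul_fromBlocks, vecMul_vecMul, hKL, hKT, hv']

theorem rank_one_sub_mul_add_card {μ : Type*} [Fintype ι] [Fintype μ] [DecidableEq ι]
    [DecidableEq μ] {K : Matrix μ ι F} {L : Matrix ι μ F} (hKL : K * L = 1) :
    (1 - L * K).rank + Fintype.card μ = Fintype.card ι := by
  have hL : L.rank = Fintype.card μ :=
    le_antisymm L.rank_le_card_width (by simpa [hKL] using K.rank_mul_le_right L)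
  have hLK : (L * K).rank ≤ Fintype.card μ := hL ▸ L.rank_mul_le_left K
  apply le_antisymm
  · have h : (1 - L * K) * L = 0 := by
      rw [Matrix.sub_mul, Matrix.mul_assoc, hKL, Matrix.one_mul, Matrix.mul_one, sub_self]
    simpa [hL] using rank_add_rank_le_card_of_mul_eq_zero h
  · have h := rank_add_le (1 - L * K) (L * K)
    rw [sub_add_cancel, rank_one] at h
    omega

theorem rank_fromCols_one [Fintype ι] [Fintype κ] [DecidableEq ι] (x : Matrix ι κ F) :
    (fromCols (1 : Matrix ι ι F) x).rank = Fintype.card ι := by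
  rw [← Matrix.one_mul (fromCols 1 x), rank_mul_eq_left_of_mul_eq_one
      (W := fromRows (1 : Matrix ι ι F) (0 : Matrix κ ι F)) (by simp [fromCols_mul_fromRows]),
    rank_one]

theorem finrank_rowSpace_fromCols_one_sup {ι' : Type*} [Fintype ι] [Fintype ι'] [Fintype κ]
    [DecidableEq ι] [DecidableEq ι'] [DecidableEq κ] (x : Matrix ι κ F) (A : Matrix ι' ι F)
    (B : Matrix ι' κ F) :
    finrank F ↥(rowSpace (fromCols (1 : Matrix ι ι F) x) ⊔ rowSpace (fromCols A B))
      = Fintype.card ι + (B - A * x).rank := by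
  have hrow : fromBlocks (1 : Matrix ι ι F) 0 (-A) (1 : Matrix ι' ι' F)
        * fromRows (fromCols (1 : Matrix ι ι F) x) (fromCols A B)
      = fromBlocks (1 : Matrix ι ι F) ((1 : Matrix ι ι F) * x) 0 (B - A * x) := by
    rw [fromBlocks_mul_fromRows, ← fromRows_fromCols_eq_fromBlocks]
    congr 1
    · simp
    · ext i (j | j) <;> simp [mul_fromCols, sub_eq_neg_add]
  rw [← rowSpace_fromRows, finrank_rowSpace, ← rank_fromBlocks_one_zero_one_mul (-A), hrow,
    rank_fromBlocks_mul_zero, rank_one]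

end Rank

section LeftInverse

variable {ι μ κ δ : Type*} [Fintype ι] [Fintype μ] [Fintype κ] [Fintype δ]
  [DecidableEq ι] [DecidableEq μ] [DecidableEq κ]
  {K : Matrix μ ι F} {L : Matrix ι μ F} {r : Matrix ι κ F}

theorem rank_fromBlocks_one_sub_mul [DecidableEq δ] (hKL : K * L = 1) (hKr : K * r = 0)
    (E : Matrix δ κ F) :
    (fromBlocks (1 - L * K) r 0 E).rank + Fintype.card μ = Fintype.card ι + E.rank := by
  have hr : r = (1 - L * K) * r := by
    rw [Matrix.sub_mul, Matrix.mul_assoc, hKr, Matrix.mul_zero, Matrix.one_mul, sub_zero]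
  conv_lhs => rw [hr, rank_fromBlocks_mul_zero]
  have := rank_one_sub_mul_add_card hKL
  omega

theorem rank_fromBlocks_sub (hKL : K * L = 1) (hKr : K * r = 0) (E : Matrix δ κ F)
    (x : Matrix ι κ F) :
    (fromBlocks L (r - x) 0 E).rank
      = Fintype.card μ + (fromRows (r - (1 - L * K) * x) E).rank := by
  have hcol :
      fromBlocks L (r - x) 0 E * fromBlocks (1 : Matrix μ μ F) (K * x) 0 (1 : Matrix κ κ F)
        = fromBlocks L (r - (1 - L * K) * x) 0 E := by
    rw [fromBlocks_multiply]
    congr 1 <;> simp only [Matrix.mul_one, Matrix.mul_zero, Matrix.zero_mul, Matrix.one_mul,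
      add_zero, zero_add, Matrix.sub_mul, Matrix.mul_assoc]
    abel
  have hKT : K * (r - (1 - L * K) * x) = 0 := by
    simp [Matrix.mul_sub, Matrix.sub_mul, ← Matrix.mul_assoc, hKL, hKr]
  rw [← rank_mul_fromBlocks_one_zero_one _ (K * x), hcol, rank_fromBlocks_of_mul_eq_one hKL hKT]

theorem subDist_rowSpace_fromCols_one [DecidableEq δ] (hKL : K * L = 1) (hKr : K * r = 0)
    {E : Matrix δ κ F} (hE : E.rank = Fintype.card δ) (x : Matrix ι κ F) :
    subDist (rowSpace (fromCols (1 : Matrix ι ι F) x)) (rowSpace (fromBlocks (1 - L * K) r 0 E))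
      = 2 * ((fromBlocks L (r - x) 0 E).rank : ℤ) - Fintype.card μ - Fintype.card δ := by
  have hsup := finrank_rowSpace_fromCols_one_sup x (fromRows (1 - L * K) 0) (fromRows r E)
  have hdiff : fromRows r E - fromRows (1 - L * K) 0 * x = fromRows (r - (1 - L * K) * x) E := by
    ext (i | i) j <;> simp [fromRows_mul]
  rw [fromCols_fromRows_eq_fromBlocks, hdiff] at hsup
  have hmod := finrank_sup_add_finrank_inf_eq (rowSpace (fromCols (1 : Matrix ι ι F) x))
    (rowSpace (fromBlocks (1 - L * K) r 0 E))
  have hM := rank_fromBlocks_one_sub_mul hKL hKr E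
  have hB := rank_fromBlocks_sub hKL hKr E x
  rw [finrank_rowSpace, finrank_rowSpace, rank_fromCols_one] at hmod
  rw [subDist, finrank_rowSpace, finrank_rowSpace, rank_fromCols_one]
  omega

end LeftInverse

end Matrix

theorem stmt1_general {F : Type*} [Field F] {N n m μ' δ' : ℕ}
    (Y : Matrix (Fin N) (Fin n ⊕ Fin m) F)
    (U : Finset (Fin n)) (hU : U.card = μ')
    (r' : Matrix (Fin n) (Fin m) F) (L' : Matrix (Fin n) (Fin μ') F)
    (E' : Matrix (Fin δ') (Fin m) F)
    (h1 : (matSel F U hU)ᵀ * r' = 0)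
    (h2 : (matSel F U hU)ᵀ * L' = -1)
    (h3 : E'.rank = δ')
    (h4 : rowSpace (Matrix.fromBlocks (1 + L' * (matSel F U hU)ᵀ) r' 0 E') = rowSpace Y) :
    ∀ x : Matrix (Fin n) (Fin m) F,
      subDist (rowSpace (Matrix.fromCols (1 : Matrix (Fin n) (Fin n) F) x)) (rowSpace Y)
        = 2 * ((Matrix.fromBlocks L' (r' - x) 0 E').rank : ℤ) - (μ' : ℤ) - (δ' : ℤ) := by
  intro x
  have hKL : -(matSel F U hU)ᵀ * L' = 1 := by rw [Matrix.neg_mul, h2, neg_neg]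
  have hKr : -(matSel F U hU)ᵀ * r' = 0 := by rw [Matrix.neg_mul, h1, neg_zero]
  have hP : 1 + L' * (matSel F U hU)ᵀ = 1 - L' * -(matSel F U hU)ᵀ := by
    rw [Matrix.mul_neg, sub_neg_eq_add]
  rw [← h4, hP, subDist_rowSpace_fromCols_one hKL hKr (by rw [h3, Fintype.card_fin]),
    Fintype.card_fin, Fintype.card_fin]

theorem stmt1 {F : Type*} [Field F] [Fintype F] {N n m μ' δ' : ℕ}
    (Y : Matrix (Fin N) (Fin n ⊕ Fin m) F)
    (U : Finset (Fin n)) (hU : U.card = μ')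
    (r' : Matrix (Fin n) (Fin m) F) (L' : Matrix (Fin n) (Fin μ') F)
    (E' : Matrix (Fin δ') (Fin m) F)
    (h1 : (matSel F U hU)ᵀ * r' = 0)
    (h2 : (matSel F U hU)ᵀ * L' = -1)
    (h3 : E'.rank = δ')
    (h4 : rowSpace (Matrix.fromBlocks (1 + L' * (matSel F U hU)ᵀ) r' 0 E') = rowSpace Y) :
    ∀ x : Matrix (Fin n) (Fin m) F,
      subDist (rowSpace (Matrix.fromCols (1 : Matrix (Fin n) (Fin n) F) x)) (rowSpace Y)
        = 2 * ((Matrix.fromBlocks L' (r' - x) 0 E').rank : ℤ) - (μ' : ℤ) - (δ' : ℤ) :=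
  stmt1_general Y U hU r' L' E' h1 h2 h3 h4
end

section
/- Let F be a field, and let r' ∈ F^{n×m}, L' ∈ F^{n×μ'}, U ⊆ {0,…,n−1} with |U| = μ' satisfy I_U^T r' = 0 and I_U^T L' = −I_{μ'}. Let E' ∈ F^{δ'×m} be arbitrary. Then for every x ∈ F^{n×m}, the rank of the (2n+δ')×(n+m) matrix obtained by vertically stacking [I_n | x], [I_n + L' I_U^T | r'], and [0 | E'] equals rank[[L' , r'−x],[0 , E']] + n − μ'. -/
open Matrix

/-!
The kernel vectors `(u, v)` of both matrices are determined by `v`: in the first, `u = -x v`;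
in the second, applying `I_Uᵀ` to `L' u + (r' - x) v = 0` gives `u = I_Uᵀ (r' - x) v`. In both
cases `v` ranges exactly over the kernel of `[P (r' - x); E']`, where `P = I + L' I_Uᵀ` is the
projection along the columns of `L'` onto the kernel of `I_Uᵀ`. Rank–nullity then gives ranks
`n + ρ` and `μ' + ρ` with `ρ` the rank of that matrix.
-/

namespace Matrix

variable {F ι κ ρ σ : Type*} [Field F] [Fintype ι] [Fintype κ]

theorem rank_add_finrank_ker_mulVecLin (A : Matrix ρ κ F) :
    A.rank + Module.finrank F (LinearMap.ker A.mulVecLin) = Fintype.card κ := by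
  simpa [rank] using LinearMap.finrank_range_add_finrank_ker A.mulVecLin

theorem rank_eq_card_add_rank_of_mulVec_sumElim_eq_zero_iff (A : Matrix ρ (ι ⊕ κ) F)
    (K : Matrix σ κ F) (T : Matrix ι κ F)
    (hA : ∀ u v, A *ᵥ Sum.elim u v = 0 ↔ u = T *ᵥ v ∧ K *ᵥ v = 0) :
    A.rank = Fintype.card ι + K.rank := by
  classical
  let g := (fromRows T 1 : Matrix (ι ⊕ κ) κ F).mulVecLin
  have hg : Function.Injective g := fun v w h => by
    simpa [g] using congrArg (· ∘ Sum.inr) h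
  have hker : LinearMap.ker A.mulVecLin = (LinearMap.ker K.mulVecLin).map g := by
    ext w
    obtain ⟨u, v, rfl⟩ : ∃ u v, w = Sum.elim u v := ⟨_, _, (Sum.elim_comp_inl_inr w).symm⟩
    simp only [LinearMap.mem_ker, mulVecLin_apply, hA, Submodule.mem_map, g, fromRows_mulVec,
      one_mulVec, Sum.elim_eq_iff]
    constructor
    · rintro ⟨rfl, hv⟩
      exact ⟨v, hv, rfl, rfl⟩
    · rintro ⟨v, hv, rfl, rfl⟩
      exact ⟨rfl, hv⟩
  have hnull := (Submodule.equivMapOfInjective g hg (LinearMap.ker K.mulVecLin)).finrank_eq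
  have hrankA := rank_add_finrank_ker_mulVecLin A
  have hrankK := rank_add_finrank_ker_mulVecLin K
  rw [hker, ← hnull, Fintype.card_sum] at hrankA
  omega

theorem rank_fromRows_fromCols_one_fromCols_zero [DecidableEq ι] {μ : Type*}
    (X : Matrix ι κ F) (P : Matrix μ ι F) (R : Matrix μ κ F) (D : Matrix σ κ F) :
    (fromRows (fromRows (fromCols 1 X) (fromCols P R)) (fromCols 0 D)).rank
      = Fintype.card ι + (fromRows (R - P * X) D).rank := by
  refine rank_eq_card_add_rank_of_mulVec_sumElim_eq_zero_iff _ _ (-X) fun u v => ?_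
  simp only [fromRows_mulVec, fromCols_mulVec_sumElim, one_mulVec, zero_mulVec, zero_add,
    Sum.elim_eq_iff, ← Sum.elim_zero_zero, sub_mulVec, ← mulVec_mulVec, neg_mulVec]
  constructor
  · rintro ⟨⟨hu, hPR⟩, hD⟩
    obtain rfl : u = -(X *ᵥ v) := eq_neg_of_add_eq_zero_left hu
    refine ⟨rfl, ?_, hD⟩
    rw [mulVec_neg] at hPR
    linear_combination hPR
  · rintro ⟨rfl, hPR, hD⟩
    refine ⟨⟨neg_add_cancel _, ?_⟩, hD⟩
    rw [mulVec_neg]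
    linear_combination hPR

theorem rank_fromBlocks_zero₂₁_of_mul_eq_one [DecidableEq ι] {μ : Type*} [Fintype μ]
    [DecidableEq μ]
    {L : Matrix ι μ F} {K : Matrix μ ι F} (hKL : K * L = 1) (B : Matrix ι κ F)
    (D : Matrix σ κ F) :
    (fromBlocks L B 0 D).rank = Fintype.card μ + (fromRows ((1 - L * K) * B) D).rank := by
  refine rank_eq_card_add_rank_of_mulVec_sumElim_eq_zero_iff _ _ (-(K * B)) fun u v => ?_
  simp only [← fromRows_fromCols_eq_fromBlocks, fromRows_mulVec, fromCols_mulVec_sumElim,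
    zero_mulVec, zero_add, Sum.elim_eq_iff, ← Sum.elim_zero_zero, ← mulVec_mulVec, sub_mulVec,
    one_mulVec, neg_mulVec]
  constructor
  · rintro ⟨hLB, hD⟩
    have hu : u = -(K *ᵥ (B *ᵥ v)) := by
      have := congrArg (K *ᵥ ·) hLB
      rw [mulVec_add, mulVec_mulVec, hKL, one_mulVec, mulVec_zero] at this
      exact eq_neg_of_add_eq_zero_left this
    subst hu
    refine ⟨rfl, ?_, hD⟩
    rw [mulVec_neg] at hLB
    linear_combination hLB
  · rintro ⟨rfl, hB, hD⟩
    refine ⟨?_, hD⟩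
    rw [mulVec_neg]
    linear_combination hB

end Matrix

theorem stmt2 {F : Type*} [Field F] {n m μ' δ' : ℕ}
    (U : Finset (Fin n)) (hU : U.card = μ')
    (r' : Matrix (Fin n) (Fin m) F) (L' : Matrix (Fin n) (Fin μ') F)
    (h1 : (matSel F U hU)ᵀ * r' = 0)
    (h2 : (matSel F U hU)ᵀ * L' = -1)
    (E' : Matrix (Fin δ') (Fin m) F) :
    ∀ x : Matrix (Fin n) (Fin m) F,
      (Matrix.fromRows
          (Matrix.fromRows (Matrix.fromCols (1 : Matrix (Fin n) (Fin n) F) x)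
            (Matrix.fromCols (1 + L' * (matSel F U hU)ᵀ) r'))
          (Matrix.fromCols (0 : Matrix (Fin δ') (Fin n) F) E')).rank
        = (Matrix.fromBlocks L' (r' - x) 0 E').rank + n - μ' := by
  intro x
  set S := matSel F U hU
  have hLeftInv : -Sᵀ * L' = 1 := by rw [Matrix.neg_mul, h2, neg_neg]
  -- `1 + L' Sᵀ` projects onto the kernel of `Sᵀ`, so it fixes `r'`.
  have hProj : (1 - L' * -Sᵀ) * (r' - x) = r' - (1 + L' * Sᵀ) * x := by
    rw [Matrix.mul_neg, sub_neg_eq_add, Matrix.mul_sub, Matrix.add_mul _ _ r', Matrix.one_mul,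
      Matrix.mul_assoc, h1, Matrix.mul_zero, add_zero]
  have hμ : μ' ≤ n := hU ▸ (U.card_le_univ.trans_eq (Fintype.card_fin n))
  rw [rank_fromRows_fromCols_one_fromCols_zero, rank_fromBlocks_zero₂₁_of_mul_eq_one hLeftInv,
    hProj, Fintype.card_fin, Fintype.card_fin]
  omega
end

section
/- Let F be a field of characteristic 2, let p ≥ 0, and let w_0, …, w_{p−1} ∈ F be linearly independent over the prime field F_2 (equivalently, the sum of every nonempty subset of {w_0,…,w_{p−1}} is nonzero). Define polynomials f_i ∈ F[X] recursively by f_0 = X and f_{i+1} = f_i² + f_i(w_i) · f_i, where f_i(w_i) denotes the evaluation of f_i at w_i. Then f_i(w_i) ≠ 0 for every i < p, and the set of roots of f_p in F, {x ∈ F : f_p(x) = 0}, equals the F_2-span of {w_0, …, w_{p−1}}, i.e., the set of all sums Σ_{i∈S} w_i over subsets S ⊆ {0,…,p−1}. -/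
/-!
In characteristic 2 every `f i` is additive, so `f (i+1)(x) = f i (x) * f i (x + w i)`: the roots of
`f (i+1)` are the roots of `f i` together with their translates by `w i`. By induction the root set
of `f k` is the set of subset sums of `w 0, …, w (k-1)`, for any family `w`. Independence then says
exactly that `w i` is not such a subset sum for `k = i`, i.e. `f i (w i) ≠ 0`.
-/

/-- The recursively defined linearized polynomials: `f 0 = X` and
`f (i+1) = (f i)^2 + f i (w i) • f i`. -/
noncomputable def fseq {F : Type*} [CommRing F] (w : ℕ → F) : ℕ → Polynomial F
  | 0 => Polynomial.X
  | i + 1 => fseq w i ^ 2 + Polynomial.C ((fseq w i).eval (w i)) * fseq w i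

open Finset Polynomial

lemma Finset.exists_map_valEmbedding_eq {k : ℕ} {S : Finset ℕ} (hS : S ⊆ range k) :
    ∃ T : Finset (Fin k), T.map Fin.valEmbedding = S :=
  ⟨S.attachFin fun _ hm => mem_range.1 (hS hm), map_valEmbedding_attachFin _⟩

lemma Finset.map_valEmbedding_subset_range {k : ℕ} (T : Finset (Fin k)) :
    T.map Fin.valEmbedding ⊆ range k := by
  intro i hi
  obtain ⟨j, -, rfl⟩ := mem_map.1 hi
  exact mem_range.2 j.isLt

/-- The `𝔽₂`-span of `w 0, …, w (k-1)`. -/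
def subsetSums {M : Type*} [AddCommMonoid M] (w : ℕ → M) (k : ℕ) : Set M :=
  {x | ∃ S ⊆ range k, ∑ i ∈ S, w i = x}

section subsetSums

variable {M : Type*} (w : ℕ → M)

@[simp]
lemma subsetSums_zero [AddCommMonoid M] : subsetSums w 0 = {0} := by
  ext x
  simp [subsetSums, eq_comm]

lemma mem_subsetSums_succ [AddCommGroup M] {k : ℕ} {x : M} :
    x ∈ subsetSums w (k + 1) ↔ x ∈ subsetSums w k ∨ x - w k ∈ subsetSums w k := by
  simp only [subsetSums, range_add_one, Set.mem_ofPred_eq]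
  constructor
  · rintro ⟨S, hS, rfl⟩
    by_cases hk : k ∈ S
    · refine Or.inr ⟨S.erase k, subset_insert_iff.1 hS, ?_⟩
      rw [← add_sum_erase S w hk, add_sub_cancel_left]
    · exact Or.inl ⟨S, (subset_insert_iff_of_notMem hk).1 hS, rfl⟩
  · rintro (⟨S, hS, rfl⟩ | ⟨S, hS, hsum⟩)
    · exact ⟨S, hS.trans (subset_insert k _), rfl⟩
    · have hk : k ∉ S := fun h => by simpa using hS h
      refine ⟨insert k S, insert_subset_insert k hS, ?_⟩
      rw [sum_insert hk, hsum, add_sub_cancel]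

lemma subsetSums_eq_setOf_finset_fin [AddCommMonoid M] (k : ℕ) :
    subsetSums w k = {x | ∃ S : Finset (Fin k), x = ∑ i ∈ S, w i} := by
  ext x
  constructor
  · rintro ⟨S, hS, rfl⟩
    obtain ⟨T, rfl⟩ := exists_map_valEmbedding_eq hS
    exact ⟨T, sum_map _ _ _⟩
  · rintro ⟨T, rfl⟩
    exact ⟨T.map Fin.valEmbedding, map_valEmbedding_subset_range T, sum_map _ _ _⟩

lemma self_notMem_subsetSums [Ring M] [CharP M 2] {p : ℕ}
    (hw : ∀ S ⊆ range p, S.Nonempty → ∑ i ∈ S, w i ≠ 0) {i : ℕ} (hi : i < p) :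
    w i ∉ subsetSums w i := by
  rintro ⟨S, hS, hsum⟩
  have hiS : i ∉ S := fun h => by simpa using hS h
  refine hw (insert i S) (insert_subset (mem_range.2 hi) (hS.trans (range_subset_range.2 hi.le)))
    (insert_nonempty i S) ?_
  rw [sum_insert hiS, hsum, CharTwo.add_self_eq_zero]

end subsetSums

section fseq

variable {F : Type*} [CommRing F] [CharP F 2] (w : ℕ → F)

lemma eval_fseq_add (i : ℕ) (x y : F) :
    (fseq w i).eval (x + y) = (fseq w i).eval x + (fseq w i).eval y := by
  induction i with
  | zero => simp [fseq]
  | succ i ih =>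
    simp only [fseq, eval_add, eval_pow, eval_mul, eval_C, ih, CharTwo.add_sq]
    ring

lemma eval_fseq_succ (i : ℕ) (x : F) :
    (fseq w (i + 1)).eval x = (fseq w i).eval x * (fseq w i).eval (x + w i) := by
  simp only [fseq, eval_add, eval_pow, eval_mul, eval_C, eval_fseq_add]
  ring

lemma eval_fseq_eq_zero_iff [NoZeroDivisors F] (k : ℕ) (x : F) :
    (fseq w k).eval x = 0 ↔ x ∈ subsetSums w k := by
  induction k generalizing x with
  | zero => simp [fseq]
  | succ k ih => rw [eval_fseq_succ, mul_eq_zero, ih, ih, mem_subsetSums_succ, CharTwo.sub_eq_add]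

end fseq

theorem stmt10 {F : Type*} [Field F] [CharP F 2] (p : ℕ) (w : ℕ → F)
    (hw : ∀ S : Finset (Fin p), S.Nonempty → ∑ i ∈ S, w (i : ℕ) ≠ 0) :
    (∀ i < p, (fseq w i).eval (w i) ≠ 0) ∧
    {x : F | (fseq w p).eval x = 0}
      = {x : F | ∃ S : Finset (Fin p), x = ∑ i ∈ S, w (i : ℕ)} := by
  have hw' : ∀ S ⊆ range p, S.Nonempty → ∑ i ∈ S, w i ≠ 0 := by
    intro S hS hne
    obtain ⟨T, rfl⟩ := exists_map_valEmbedding_eq hS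
    rw [sum_map]
    exact hw T (map_nonempty.1 hne)
  refine ⟨fun i hi => ?_, ?_⟩
  · rw [Ne, eval_fseq_eq_zero_iff]
    exact self_notMem_subsetSums w hw' hi
  · ext x
    rw [← subsetSums_eq_setOf_finset_fin, ← eval_fseq_eq_zero_iff]
    rfl
end
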